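/- arXiv:1907.05066 — 7 statements merged into one kernel-verified Lean document; each statement's English description precedes it below -/
import Mathlib

section
/- For any t > 0 and μ ≠ 0, the function a ↦ 1 - (2/π) ∫₀^{√((t-a)/a)} e^{-(μ²/2)·a·(1+y²)}/(1+y²) dy, defined on (0,t], tends to 0 as a → 0⁺; i.e., lim_{a→0⁺} (2/π) ∫₀^{√((t-a)/a)} e^{-(μ²/2)·a·(1+y²)}/(1+y²) dy = 1. -/
/-! Since `0 ≤ 1 - exp (-s) ≤ s` for `s ≥ 0`, the integrand differs from `1 / (1 + y²)` by at most
`(μ² / 2) a`. Hence the integral is `arctan √((t - a) / a) → π / 2` up to an error of at most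
`(μ² / 2) a √((t - a) / a) = (μ² / 2) √(a (t - a)) → 0`. -/

open Real Filter Topology

lemma abs_exp_mul_div_sub_one_div_le {k u : ℝ} (hk : k ≤ 0) (hu : 0 < u) :
    |exp (k * u) / u - 1 / u| ≤ -k := by
  have hle_one : exp (k * u) ≤ 1 := exp_le_one_iff.mpr (mul_nonpos_of_nonpos_of_nonneg hk hu.le)
  have hge : k * u + 1 ≤ exp (k * u) := add_one_le_exp _
  rw [← sub_div, abs_div, abs_of_pos hu, abs_of_nonpos (by linarith), div_le_iff₀ hu]
  linarith

lemma abs_integral_exp_mul_div_one_add_sq_sub_arctan_le {k : ℝ} (hk : k ≤ 0) (x : ℝ) :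
    |(∫ y in (0 : ℝ)..x, exp (k * (1 + y ^ 2)) / (1 + y ^ 2)) - arctan x| ≤ -k * |x| := by
  have hpos (y : ℝ) : 0 < 1 + y ^ 2 := by positivity
  have hexp : Continuous fun y : ℝ => exp (k * (1 + y ^ 2)) / (1 + y ^ 2) :=
    (by fun_prop : Continuous fun y : ℝ => exp (k * (1 + y ^ 2))).div (by fun_prop)
      fun y => (hpos y).ne'
  have hone : Continuous fun y : ℝ => 1 / (1 + y ^ 2) :=
    continuous_const.div (by fun_prop) fun y => (hpos y).ne'
  have harctan : arctan x = ∫ y in (0 : ℝ)..x, 1 / (1 + y ^ 2) := by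
    rw [integral_one_div_one_add_sq, arctan_zero, sub_zero]
  rw [harctan, ← intervalIntegral.integral_sub (hexp.intervalIntegrable _ _)
    (hone.intervalIntegrable _ _)]
  simpa using intervalIntegral.norm_integral_le_of_norm_le_const (a := 0) (b := x)
    fun y _ => (norm_eq_abs _).trans_le (abs_exp_mul_div_sub_one_div_le hk (hpos y))

lemma tendsto_sqrt_sub_div_nhdsGT_zero {t : ℝ} (ht : 0 < t) :
    Tendsto (fun a : ℝ => √((t - a) / a)) (𝓝[>] 0) atTop := by
  refine tendsto_sqrt_atTop.comp ?_
  have h : Tendsto (fun a : ℝ => t * a⁻¹ - 1) (𝓝[>] 0) atTop :=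
    tendsto_atTop_add_const_right _ (-1) (tendsto_inv_nhdsGT_zero.const_mul_atTop ht)
  refine h.congr' ?_
  filter_upwards [self_mem_nhdsWithin] with a (ha : 0 < a)
  field_simp

lemma mul_sqrt_div_eq_sqrt_mul {a : ℝ} (ha : 0 ≤ a) (b : ℝ) : a * √(b / a) = √(a * b) := by
  rcases ha.eq_or_lt with rfl | ha
  · simp
  · rw [← sqrt_sq ha.le, ← sqrt_mul (sq_nonneg a), sqrt_sq ha.le]
    congr 1
    field_simp

theorem stmt_0_general (t μ : ℝ) (ht : 0 < t) :
    Tendsto (fun a : ℝ =>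
        (2 / π) * ∫ y in (0:ℝ)..Real.sqrt ((t - a) / a),
          Real.exp (-(μ ^ 2 / 2) * a * (1 + y ^ 2)) / (1 + y ^ 2))
      (nhdsWithin 0 (Set.Ioi 0)) (nhds 1) := by
  have hX := tendsto_sqrt_sub_div_nhdsGT_zero ht
  have harctan : Tendsto (fun a : ℝ => arctan √((t - a) / a)) (𝓝[>] 0) (𝓝 (π / 2)) :=
    (tendsto_arctan_atTop.mono_right nhdsWithin_le_nhds).comp hX
  have hbound : Tendsto (fun a : ℝ => μ ^ 2 / 2 * √(a * (t - a))) (𝓝[>] 0) (𝓝 0) := by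
    have h : Continuous fun a : ℝ => μ ^ 2 / 2 * √(a * (t - a)) := by fun_prop
    simpa using (h.tendsto 0).mono_left nhdsWithin_le_nhds
  have hdist : ∀ᶠ a in 𝓝[>] 0, dist (arctan √((t - a) / a))
      (∫ y in (0 : ℝ)..√((t - a) / a), exp (-(μ ^ 2 / 2) * a * (1 + y ^ 2)) / (1 + y ^ 2))
        ≤ μ ^ 2 / 2 * √(a * (t - a)) := by
    filter_upwards [self_mem_nhdsWithin] with a (ha : 0 < a)
    have hk : -(μ ^ 2 / 2) * a ≤ 0 := mul_nonpos_of_nonpos_of_nonneg (by nlinarith) ha.le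
    rw [dist_comm, dist_eq_norm, norm_eq_abs, ← mul_sqrt_div_eq_sqrt_mul ha.le]
    calc _ ≤ -(-(μ ^ 2 / 2) * a) * |√((t - a) / a)| :=
          abs_integral_exp_mul_div_one_add_sq_sub_arctan_le hk _
      _ = _ := by rw [abs_of_nonneg (sqrt_nonneg _)]; ring
  have hintegral := tendsto_of_tendsto_of_dist harctan <|
    squeeze_zero' (.of_forall fun _ => dist_nonneg) hdist hbound
  simpa [pi_ne_zero] using hintegral.const_mul (2 / π)

theorem stmt_0 (t μ : ℝ) (ht : 0 < t) (hμ : μ ≠ 0) :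
    Tendsto (fun a : ℝ =>
        (2 / π) * ∫ y in (0:ℝ)..Real.sqrt ((t - a) / a),
          Real.exp (-(μ ^ 2 / 2) * a * (1 + y ^ 2)) / (1 + y ^ 2))
      (nhdsWithin 0 (Set.Ioi 0)) (nhds 1) :=
  stmt_0_general t μ ht
end

section
/- Fix 0 < a < b and μ ≠ 0, and set Ψ_{[a,b]}(μ√r) = (2/π) ∫₀^{√((b-a)/a)} e^{-(μ²·r·a/2)(1+y²)}/(1+y²) dy. Then lim_{r→∞} (1/r) · log Ψ_{[a,b]}(μ√r) = -μ²·a/2. -/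
/-!
Since `(1 + y²)` factors out of the exponent, the integral equals `e^{-c r} J(c r)` with
`c = μ² a / 2` and `J(κ) = ∫₀^T e^{-κ y²} / (1 + y²) dy`. The factor `J` decays only
polynomially: it is at most `T`, and at least `e^{-1} / (1 + T²) · κ^{-1/2}` by restricting to
`[0, κ^{-1/2}]`. Hence `log J(c r) = O(log r)` contributes nothing to the exponential rate.
-/

open Real Filter Topology

theorem tendsto_inv_mul_log_of_rpow_le_of_le {f : ℝ → ℝ} {K M p : ℝ} (hK : 0 < K)
    (hlow : ∀ᶠ r in atTop, K * r ^ (-p) ≤ f r) (hup : ∀ᶠ r in atTop, f r ≤ M) :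
    Tendsto (fun r => r⁻¹ * log (f r)) atTop (𝓝 0) := by
  have hlog : Tendsto (fun r : ℝ => r⁻¹ * log r) atTop (𝓝 0) := by
    simpa only [inv_mul_eq_div, id] using isLittleO_log_id_atTop.tendsto_div_nhds_zero
  have hlowlim : Tendsto (fun r => r⁻¹ * log (K * r ^ (-p))) atTop (𝓝 0) := by
    have h := (tendsto_inv_atTop_zero.mul_const (log K)).sub (hlog.const_mul p)
    simp only [zero_mul, mul_zero, sub_zero] at h
    refine h.congr' ?_
    filter_upwards [eventually_gt_atTop 0] with r hr
    rw [log_mul hK.ne' (rpow_pos_of_pos hr _).ne', log_rpow hr]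
    ring
  refine tendsto_of_tendsto_of_tendsto_of_le_of_le' hlowlim
    (tendsto_inv_atTop_zero.mul_const (log M) |>.trans (by rw [zero_mul])) ?_ ?_
  · filter_upwards [hlow, eventually_gt_atTop 0] with r hr hr0
    gcongr
  · filter_upwards [hlow, hup, eventually_gt_atTop 0] with r hr hr' hr0
    gcongr
    exact (by positivity : 0 < K * r ^ (-p)).trans_le hr

noncomputable def gaussArctanIntegral (T κ : ℝ) : ℝ :=
  ∫ y in (0 : ℝ)..T, exp (-κ * y ^ 2) / (1 + y ^ 2)

theorem continuous_exp_neg_mul_sq_div_one_add_sq (κ : ℝ) :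
    Continuous fun y : ℝ => exp (-κ * y ^ 2) / (1 + y ^ 2) :=
  .div (by fun_prop) (by fun_prop) fun y => by positivity

theorem gaussArctanIntegral_pos {T : ℝ} (hT : 0 < T) (κ : ℝ) : 0 < gaussArctanIntegral T κ :=
  intervalIntegral.intervalIntegral_pos_of_pos
    ((continuous_exp_neg_mul_sq_div_one_add_sq κ).intervalIntegrable _ _)
    (fun _ => by positivity) hT

theorem gaussArctanIntegral_le {T κ : ℝ} (hT : 0 ≤ T) (hκ : 0 ≤ κ) :
    gaussArctanIntegral T κ ≤ T := by
  have hle : ∀ y ∈ Set.Icc 0 T, exp (-κ * y ^ 2) / (1 + y ^ 2) ≤ 1 := fun y _ => by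
    rw [div_le_one (by positivity)]
    have : exp (-κ * y ^ 2) ≤ 1 := exp_le_one_iff.2 (by nlinarith [sq_nonneg y])
    nlinarith [sq_nonneg y]
  simpa [gaussArctanIntegral] using intervalIntegral.integral_mono_on hT
    ((continuous_exp_neg_mul_sq_div_one_add_sq κ).intervalIntegrable 0 T)
    (intervalIntegrable_const (μ := MeasureTheory.volume)) hle

theorem rpow_neg_half_le_gaussArctanIntegral {T κ : ℝ} (hT : 0 ≤ T) (hκ : 0 < κ)
    (hκT : κ⁻¹ ≤ T ^ 2) :
    exp (-1) / (1 + T ^ 2) * κ ^ (-(1 / 2) : ℝ) ≤ gaussArctanIntegral T κ := by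
  set s := κ ^ (-(1 / 2) : ℝ)
  have hs : 0 ≤ s := by positivity
  have hs2 : s ^ 2 = κ⁻¹ := by
    rw [← rpow_natCast, ← rpow_mul hκ.le]; norm_num [rpow_neg_one]
  have hsT : s ≤ T := (pow_le_pow_iff_left₀ hs hT two_ne_zero).1 (hs2 ▸ hκT)
  have hcont := continuous_exp_neg_mul_sq_div_one_add_sq κ
  have hle : ∀ y ∈ Set.Icc 0 s, exp (-1) / (1 + T ^ 2) ≤ exp (-κ * y ^ 2) / (1 + y ^ 2) := by
    rintro y ⟨hy0, hys⟩
    have hy2 : κ * y ^ 2 ≤ 1 := by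
      calc κ * y ^ 2 ≤ κ * s ^ 2 := by gcongr
        _ = 1 := by rw [hs2, mul_inv_cancel₀ hκ.ne']
    gcongr
    · linarith
    · exact hys.trans hsT
  calc exp (-1) / (1 + T ^ 2) * s
      = ∫ y in (0 : ℝ)..s, exp (-1) / (1 + T ^ 2) := by simp [mul_comm, mul_div_assoc]
    _ ≤ ∫ y in (0 : ℝ)..s, exp (-κ * y ^ 2) / (1 + y ^ 2) :=
      intervalIntegral.integral_mono_on hs intervalIntegrable_const
        (hcont.intervalIntegrable _ _) hle
    _ ≤ gaussArctanIntegral T κ :=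
      intervalIntegral.integral_mono_interval le_rfl hs hsT
        (.of_forall fun y => by positivity) (hcont.intervalIntegrable _ _)

theorem tendsto_inv_mul_log_gaussArctanIntegral {T c : ℝ} (hT : 0 < T) (hc : 0 < c) :
    Tendsto (fun r => r⁻¹ * log (gaussArctanIntegral T (c * r))) atTop (𝓝 0) := by
  have hκT : ∀ᶠ r in atTop, (c * r)⁻¹ ≤ T ^ 2 :=
    ((tendsto_inv_atTop_zero.comp (tendsto_id.const_mul_atTop hc)).eventually_lt_const
      (by positivity)).mono fun _ h => h.le
  refine tendsto_inv_mul_log_of_rpow_le_of_le (p := 1 / 2) (M := T)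
    (K := exp (-1) / (1 + T ^ 2) * c ^ (-(1 / 2) : ℝ)) (by positivity) ?_ ?_
  · filter_upwards [hκT, eventually_gt_atTop 0] with r hr hr0
    calc exp (-1) / (1 + T ^ 2) * c ^ (-(1 / 2) : ℝ) * r ^ (-(1 / 2) : ℝ)
        = exp (-1) / (1 + T ^ 2) * (c * r) ^ (-(1 / 2) : ℝ) := by
          rw [mul_rpow hc.le hr0.le, mul_assoc]
      _ ≤ _ := rpow_neg_half_le_gaussArctanIntegral hT.le (by positivity) hr
  · filter_upwards [eventually_ge_atTop 0] with r hr
    exact gaussArctanIntegral_le hT.le (by positivity)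

theorem stmt_2 (a b μ : ℝ) (ha : 0 < a) (hab : a < b) (hμ : μ ≠ 0) :
    Tendsto (fun r : ℝ =>
        (1 / r) * Real.log ((2 / π) * ∫ y in (0:ℝ)..Real.sqrt ((b - a) / a),
          Real.exp (-(μ ^ 2 * r * a / 2) * (1 + y ^ 2)) / (1 + y ^ 2)))
      atTop (nhds (-(μ ^ 2 * a / 2))) := by
  set c := μ ^ 2 * a / 2
  set T := √((b - a) / a)
  have hc : 0 < c := by positivity
  have hT : 0 < T := sqrt_pos.2 (div_pos (sub_pos.2 hab) ha)
  have hfactor : ∀ r,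
      (∫ y in (0:ℝ)..T, exp (-(μ ^ 2 * r * a / 2) * (1 + y ^ 2)) / (1 + y ^ 2)) =
        exp (-(c * r)) * gaussArctanIntegral T (c * r) := fun r => by
    rw [gaussArctanIntegral, ← intervalIntegral.integral_const_mul]
    congr 1 with y
    rw [← mul_div_assoc, ← exp_add]
    simp only [c]
    ring_nf
  have hlim := ((tendsto_inv_atTop_zero.mul_const (log (2 / π))).sub_const c).add
    (tendsto_inv_mul_log_gaussArctanIntegral hT hc)
  rw [zero_mul, zero_sub, add_zero] at hlim
  refine hlim.congr' ?_
  filter_upwards [eventually_gt_atTop 0] with r hr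
  rw [hfactor, log_mul (by positivity) (mul_pos (exp_pos _) (gaussArctanIntegral_pos hT _)).ne',
    log_mul (exp_pos _).ne' (gaussArctanIntegral_pos hT _).ne', log_exp]
  field_simp
  ring
end

section
/- Fix 0 < a < b and μ ≠ 0, and set Ψ_{[a,b]}(μ√r) = (2/π) ∫₀^{√((b-a)/a)} e^{-(μ²·r·a/2)(1+y²)}/(1+y²) dy. Then lim_{r→∞} e^{μ²·r·a/2} · √r · Ψ_{[a,b]}(μ√r) = √(2/(π·μ²·a)). -/
/-!
With `c = μ² a / 2`, the factor `e^{-c r}` splits off the integrand and cancels the prefactor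
`e^{c r}`, leaving the Laplace-type integral `√r ∫₀ᵀ e^{-c r y²} g y dy` with `g y = (1 + y²)⁻¹` and
`T = √((b - a) / a)`.
The substitution `u = y √r` turns it into `∫₀^{T√r} e^{-c u²} g (u / √r) du`, which tends to
`g 0 ∫₀^∞ e^{-c u²} du = √(π / c) / 2` by dominated convergence (dominated by `M e^{-c u²}`, `M`
a bound for `|g|` on `[0, T]`).
-/

open Real Filter MeasureTheory Set Topology

lemma sqrt_mul_integral_exp_neg_mul_sq_mul {c r T : ℝ} (hr : 0 < r) (g : ℝ → ℝ) :
    √r * ∫ y in (0:ℝ)..T, exp (-(c * r) * y ^ 2) * g y =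
      ∫ u in (0:ℝ)..T * √r, exp (-c * u ^ 2) * g (u / √r) := by
  have hsr : √r ≠ 0 := (sqrt_pos.2 hr).ne'
  have := intervalIntegral.integral_comp_div (a := 0) (b := T * √r)
    (fun y => exp (-(c * r) * y ^ 2) * g y) hsr
  rw [zero_div, mul_div_cancel_right₀ _ hsr, smul_eq_mul] at this
  rw [← this]
  refine intervalIntegral.integral_congr fun u _ => ?_
  rw [div_pow, sq_sqrt hr.le]
  congr 2
  field_simp

lemma tendsto_integral_Ioc_exp_neg_mul_sq_mul_comp_div_sqrt {c T : ℝ} (hc : 0 < c) (hT : 0 < T)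
    {g : ℝ → ℝ} (hg : Continuous g) :
    Tendsto (fun r => ∫ u in Ioc 0 (T * √r), exp (-c * u ^ 2) * g (u / √r)) atTop
      (𝓝 (∫ u in Ioi 0, exp (-c * u ^ 2) * g 0)) := by
  obtain ⟨M, hM⟩ := isCompact_Icc.exists_bound_of_continuousOn (hg.continuousOn (s := Icc 0 T))
  have hM0 : 0 ≤ M := (norm_nonneg _).trans (hM 0 ⟨le_rfl, hT.le⟩)
  simp_rw [← integral_indicator measurableSet_Ioc, ← integral_indicator measurableSet_Ioi]
  refine tendsto_integral_filter_of_dominated_convergence (fun u => M * exp (-c * u ^ 2))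
    (.of_forall fun r => (Continuous.aestronglyMeasurable (by fun_prop)).indicator
      measurableSet_Ioc) ?_ ((integrable_exp_neg_mul_sq hc).const_mul M) ?_
  · filter_upwards [eventually_gt_atTop 0] with r hr
    refine .of_forall fun u => ?_
    by_cases hu : u ∈ Ioc 0 (T * √r)
    · have hgu : u / √r ∈ Icc 0 T :=
        ⟨div_nonneg hu.1.le (sqrt_nonneg r), (div_le_iff₀ (sqrt_pos.2 hr)).2 hu.2⟩
      rw [indicator_of_mem hu, norm_mul, norm_of_nonneg (exp_pos _).le, mul_comm]
      exact mul_le_mul_of_nonneg_right (hM _ hgu) (exp_pos _).le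
    · rw [indicator_of_notMem hu, norm_zero]
      positivity
  · refine .of_forall fun u => ?_
    by_cases hu : 0 < u
    · rw [indicator_of_mem (mem_Ioi.2 hu)]
      have hlim : Tendsto (fun r => exp (-c * u ^ 2) * g (u / √r)) atTop
          (𝓝 (exp (-c * u ^ 2) * g 0)) := by
        refine tendsto_const_nhds.mul ((hg.tendsto 0).comp ?_)
        simpa using tendsto_sqrt_atTop.const_div_atTop u
      refine hlim.congr' ?_
      filter_upwards [(tendsto_sqrt_atTop.const_mul_atTop hT).eventually_ge_atTop u] with r hr
      rw [indicator_of_mem (show u ∈ Ioc 0 (T * √r) from ⟨hu, hr⟩)]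
    · have hu' : ∀ r, u ∉ Ioc 0 (T * √r) := fun r h => hu h.1
      simp only [indicator_of_notMem (show u ∉ Ioi 0 from hu), indicator_of_notMem (hu' _),
        tendsto_const_nhds]

theorem tendsto_sqrt_mul_integral_exp_neg_mul_sq_mul {c T : ℝ} (hc : 0 < c) (hT : 0 < T)
    {g : ℝ → ℝ} (hg : Continuous g) :
    Tendsto (fun r => √r * ∫ y in (0:ℝ)..T, exp (-(c * r) * y ^ 2) * g y) atTop
      (𝓝 (√(π / c) / 2 * g 0)) := by
  have hlim := tendsto_integral_Ioc_exp_neg_mul_sq_mul_comp_div_sqrt hc hT hg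
  rw [integral_mul_const, integral_gaussian_Ioi] at hlim
  refine hlim.congr' ?_
  filter_upwards [eventually_gt_atTop 0] with r hr
  rw [sqrt_mul_integral_exp_neg_mul_sq_mul hr, intervalIntegral.integral_of_le (by positivity)]

theorem stmt_3 (a b μ : ℝ) (ha : 0 < a) (hab : a < b) (hμ : μ ≠ 0) :
    Tendsto (fun r : ℝ =>
        Real.exp (μ ^ 2 * r * a / 2) * Real.sqrt r *
          ((2 / π) * ∫ y in (0:ℝ)..Real.sqrt ((b - a) / a),
            Real.exp (-(μ ^ 2 * r * a / 2) * (1 + y ^ 2)) / (1 + y ^ 2)))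
      atTop (nhds (Real.sqrt (2 / (π * μ ^ 2 * a)))) := by
  set c := μ ^ 2 * a / 2 with hc_def
  have hc : 0 < c := by positivity
  have hT : 0 < √((b - a) / a) := sqrt_pos.2 (div_pos (sub_pos.2 hab) ha)
  have hg : Continuous fun y : ℝ => (1 + y ^ 2)⁻¹ :=
    (continuous_const.add (continuous_pow 2)).inv₀ fun y =>
      (add_pos_of_pos_of_nonneg one_pos (sq_nonneg y)).ne'
  have hlim := (tendsto_sqrt_mul_integral_exp_neg_mul_sq_mul hc hT hg).const_mul (2 / π)
  have hval : 2 / π * (√(π / c) / 2 * (1 + 0 ^ 2)⁻¹) = √(2 / (π * μ ^ 2 * a)) := by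
    have hsq : 2 / (π * μ ^ 2 * a) = (π / c) / π ^ 2 := by
      rw [hc_def]; field_simp
    rw [hsq, sqrt_div' _ (sq_nonneg π), sqrt_sq pi_pos.le]
    ring
  rw [hval] at hlim
  refine hlim.congr fun r => ?_
  have hsplit : ∀ y : ℝ, exp (-(μ ^ 2 * r * a / 2) * (1 + y ^ 2)) / (1 + y ^ 2) =
      exp (-(c * r)) * (exp (-(c * r) * y ^ 2) * (1 + y ^ 2)⁻¹) := fun y => by
    rw [div_eq_mul_inv, ← mul_assoc, ← exp_add, hc_def]; ring_nf
  have hexp : exp (μ ^ 2 * r * a / 2) * exp (-(c * r)) = 1 := by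
    rw [← exp_add, hc_def, ← exp_zero]; ring_nf
  simp_rw [hsplit, intervalIntegral.integral_const_mul]
  generalize (∫ y in (0:ℝ)..√((b - a) / a), exp (-(c * r) * y ^ 2) * (1 + y ^ 2)⁻¹) = I
  linear_combination -(2 / π * √r * I) * hexp
end

section
/- Let μ ≠ 0, t > 0, and let (γ_r)_{r>0} be positive numbers with γ_r → 0 and r·γ_r → ∞ as r → ∞. For z > 0 define, for r large enough so that z/(rγ_r) ∈ [0,t], P_r(z) = (2/π) ∫₀^{√((t - z/(rγ_r))/(z/(rγ_r)))} e^{-(μ²·z/(2γ_r))(1+y²)}/(1+y²) dy. Then lim_{r→∞} γ_r · log P_r(z) = -μ²·z/2. -/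
/-!
With `c = μ²z/(2γ)`, the integrand `e^{-c(1+y²)}/(1+y²)` is at most `e^{-c}/(1+y²)`, whose
integral over `[0, ∞)` is `π/2`, so `P ≤ e^{-c}`. On `[0, √γ]` it is at least `e^{-c(1+γ)}/2`,
and the upper limit of integration eventually exceeds `1 ≥ √γ`, so `P ≥ √γ e^{-c(1+γ)}/π`.
Multiplying the logarithms of both bounds by `γ` squeezes `γ log P` between `-μ²z/2` and a
quantity tending to `-μ²z/2`, since `γ log γ → 0`.
-/

open Real Filter

lemma continuous_exp_mul_div_one_add_sq (c : ℝ) :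
    Continuous fun y : ℝ => exp (-c * (1 + y ^ 2)) / (1 + y ^ 2) := by
  fun_prop (disch := intro; positivity)

lemma integral_exp_mul_div_one_add_sq_le {c b : ℝ} (hc : 0 ≤ c) (hb : 0 ≤ b) :
    ∫ y in (0:ℝ)..b, exp (-c * (1 + y ^ 2)) / (1 + y ^ 2) ≤ exp (-c) * arctan b := by
  have hle : ∀ y ∈ Set.Icc (0:ℝ) b,
      exp (-c * (1 + y ^ 2)) / (1 + y ^ 2) ≤ exp (-c) * (1 + y ^ 2)⁻¹ := fun y _ => by
    rw [← div_eq_mul_inv]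
    gcongr
    nlinarith [sq_nonneg y]
  calc ∫ y in (0:ℝ)..b, exp (-c * (1 + y ^ 2)) / (1 + y ^ 2)
      ≤ ∫ y in (0:ℝ)..b, exp (-c) * (1 + y ^ 2)⁻¹ :=
        intervalIntegral.integral_mono_on hb
          ((continuous_exp_mul_div_one_add_sq c).intervalIntegrable _ _)
          (by apply Continuous.intervalIntegrable; fun_prop (disch := intro; positivity)) hle
    _ = exp (-c) * arctan b := by
        rw [intervalIntegral.integral_const_mul, integral_inv_one_add_sq, arctan_zero, sub_zero]

lemma mul_exp_le_integral_exp_mul_div_one_add_sq {c δ b : ℝ} (hc : 0 ≤ c) (hδ : 0 ≤ δ)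
    (hδ1 : δ ≤ 1) (hδb : δ ≤ b) :
    δ * exp (-c * (1 + δ ^ 2)) / 2 ≤
      ∫ y in (0:ℝ)..b, exp (-c * (1 + y ^ 2)) / (1 + y ^ 2) := by
  set f := fun y : ℝ => exp (-c * (1 + y ^ 2)) / (1 + y ^ 2)
  have hf := continuous_exp_mul_div_one_add_sq c
  have hle : ∀ y ∈ Set.Icc (0:ℝ) δ, exp (-c * (1 + δ ^ 2)) / 2 ≤ f y := fun y hy => by
    have hy2 : y ^ 2 ≤ δ ^ 2 := pow_le_pow_left₀ hy.1 hy.2 2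
    have hδ2 : δ ^ 2 ≤ 1 := pow_le_one₀ hδ hδ1
    calc exp (-c * (1 + δ ^ 2)) / 2 ≤ exp (-c * (1 + y ^ 2)) / 2 := by
          gcongr exp ?_ / 2
          nlinarith
      _ ≤ f y := div_le_div_of_nonneg_left (exp_pos _).le (by positivity) (by linarith)
  have hhead : δ * exp (-c * (1 + δ ^ 2)) / 2 ≤ ∫ y in (0:ℝ)..δ, f y := by
    calc δ * exp (-c * (1 + δ ^ 2)) / 2 = ∫ _ in (0:ℝ)..δ, exp (-c * (1 + δ ^ 2)) / 2 := by
          rw [intervalIntegral.integral_const, smul_eq_mul, sub_zero, mul_div_assoc]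
      _ ≤ ∫ y in (0:ℝ)..δ, f y :=
          intervalIntegral.integral_mono_on hδ intervalIntegrable_const
            (hf.intervalIntegrable _ _) hle
  have htail : 0 ≤ ∫ y in δ..b, f y :=
    intervalIntegral.integral_nonneg hδb fun y _ => by positivity
  rw [← intervalIntegral.integral_add_adjacent_intervals (hf.intervalIntegrable 0 δ)
    (hf.intervalIntegrable δ b)]
  linarith

lemma log_two_div_pi_mul_integral_le {c b : ℝ} (hc : 0 ≤ c) (hb : 1 ≤ b) :
    log (2 / π * ∫ y in (0:ℝ)..b, exp (-c * (1 + y ^ 2)) / (1 + y ^ 2)) ≤ -c := by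
  have hpos : 0 < ∫ y in (0:ℝ)..b, exp (-c * (1 + y ^ 2)) / (1 + y ^ 2) :=
    (by positivity : (0:ℝ) < 1 * exp (-c * (1 + 1 ^ 2)) / 2).trans_le
      (mul_exp_le_integral_exp_mul_div_one_add_sq hc zero_le_one le_rfl hb)
  refine (log_le_log (by positivity) ?_).trans_eq (log_exp (-c))
  calc 2 / π * ∫ y in (0:ℝ)..b, exp (-c * (1 + y ^ 2)) / (1 + y ^ 2)
      ≤ 2 / π * (exp (-c) * (π / 2)) := by
        gcongr
        exact (integral_exp_mul_div_one_add_sq_le hc (by linarith)).trans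
          (by gcongr; exact (arctan_lt_pi_div_two b).le)
    _ = exp (-c) := by field_simp

lemma log_div_two_sub_log_pi_sub_le_log_integral {g c b : ℝ} (hg : 0 < g) (hg1 : g ≤ 1)
    (hc : 0 ≤ c) (hb : 1 ≤ b) :
    log g / 2 - log π - c * (1 + g) ≤
      log (2 / π * ∫ y in (0:ℝ)..b, exp (-c * (1 + y ^ 2)) / (1 + y ^ 2)) := by
  have hδ : 0 < √g := sqrt_pos.2 hg
  have hδ1 : √g ≤ 1 := sqrt_le_one.2 hg1
  have hbound := mul_exp_le_integral_exp_mul_div_one_add_sq hc hδ.le hδ1 (hδ1.trans hb)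
  rw [sq_sqrt hg.le] at hbound
  calc log g / 2 - log π - c * (1 + g) = log (√g * exp (-c * (1 + g)) / π) := by
        rw [log_div (by positivity) pi_pos.ne', log_mul hδ.ne' (exp_pos _).ne', log_exp,
          log_sqrt hg.le]
        ring
    _ ≤ _ := by
        refine log_le_log (by positivity) ?_
        calc √g * exp (-c * (1 + g)) / π = 2 / π * (√g * exp (-c * (1 + g)) / 2) := by
              field_simp
          _ ≤ _ := by gcongr

lemma tendsto_mul_log_div_two_sub {α : Type*} {l : Filter α} {g : α → ℝ}
    (hg : Tendsto g l (nhds 0)) (κ : ℝ) :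
    Tendsto (fun x => g x * log (g x) / 2 - g x * log π - κ * (1 + g x)) l (nhds (-κ)) := by
  have hmullog : Tendsto (fun x => g x * log (g x)) l (nhds 0) := by
    simpa [Function.comp_def] using (continuous_mul_log.tendsto 0).comp hg
  simpa using ((hmullog.div_const 2).sub (hg.mul_const (log π))).sub
    (((tendsto_const_nhds (x := (1:ℝ))).add hg).const_mul κ)

lemma one_le_sqrt_sub_div_self {a t : ℝ} (ha : 0 < a) (hat : 2 * a ≤ t) :
    1 ≤ √((t - a) / a) :=
  one_le_sqrt.2 <| (one_le_div ha).2 (by linarith)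

theorem stmt_6_general (μ t : ℝ) (ht : 0 < t)
    (γ : ℝ → ℝ)
    (hγ0 : Tendsto γ atTop (nhds 0))
    (hrγ : Tendsto (fun r => r * γ r) atTop atTop)
    (z : ℝ) (hz : 0 < z) :
    Tendsto (fun r : ℝ =>
        γ r * Real.log ((2 / π) *
          ∫ y in (0:ℝ)..Real.sqrt ((t - z / (r * γ r)) / (z / (r * γ r))),
            Real.exp (-(μ ^ 2 * z / (2 * γ r)) * (1 + y ^ 2)) / (1 + y ^ 2)))
      atTop (nhds (-(μ ^ 2 * z / 2))) := by
  refine tendsto_of_tendsto_of_tendsto_of_le_of_le' (tendsto_mul_log_div_two_sub hγ0 _)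
    tendsto_const_nhds ?_ ?_ <;>
  filter_upwards [eventually_gt_atTop 0, hγ0.eventually_le_const one_pos,
    hrγ.eventually_gt_atTop 0, hrγ.eventually_ge_atTop (2 * z / t)] with r hr hγ1 hR hRt
  all_goals
    have hγ : 0 < γ r := pos_of_mul_pos_right hR hr.le
    have hc : 0 ≤ μ ^ 2 * z / (2 * γ r) := by positivity
    have hγc : γ r * (μ ^ 2 * z / (2 * γ r)) = μ ^ 2 * z / 2 := by field_simp
    have hb : 1 ≤ √((t - z / (r * γ r)) / (z / (r * γ r))) := by
      refine one_le_sqrt_sub_div_self (by positivity) ?_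
      rw [mul_div_assoc', div_le_iff₀ hR]
      linarith [(div_le_iff₀ ht).1 hRt]
  · have := mul_le_mul_of_nonneg_left
      (log_div_two_sub_log_pi_sub_le_log_integral hγ hγ1 hc hb) hγ.le
    linear_combination this + (1 + γ r) * hγc
  · have := mul_le_mul_of_nonneg_left (log_two_div_pi_mul_integral_le hc hb) hγ.le
    linear_combination this - hγc

theorem stmt_6 (μ t : ℝ) (hμ : μ ≠ 0) (ht : 0 < t)
    (γ : ℝ → ℝ) (hγpos : ∀ r > 0, 0 < γ r)
    (hγ0 : Tendsto γ atTop (nhds 0))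
    (hrγ : Tendsto (fun r => r * γ r) atTop atTop)
    (z : ℝ) (hz : 0 < z) :
    Tendsto (fun r : ℝ =>
        γ r * Real.log ((2 / π) *
          ∫ y in (0:ℝ)..Real.sqrt ((t - z / (r * γ r)) / (z / (r * γ r))),
            Real.exp (-(μ ^ 2 * z / (2 * γ r)) * (1 + y ^ 2)) / (1 + y ^ 2)))
      atTop (nhds (-(μ ^ 2 * z / 2))) :=
  stmt_6_general μ t ht γ hγ0 hrγ z hz
end

section
/- Let μ ≠ 0, t > 0. The density f_{μ,t}(a) = e^{-μ²t/2}/(π√(a(t-a))) + (μ²/(2π)) ∫_a^t e^{-μ²y/2}/√(a(y-a)) dy, for a ∈ (0,t), satisfies the lower bound f_{μ,t}(a) ≥ (e^{-μ²a/2} - e^{-μ²t/2})/(π√(a(t-a))) for all a ∈ (0,t). -/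
open Real MeasureTheory

/-- Density of the last zero crossing time of a Brownian motion with drift `μ` on `[0,t]`. -/
noncomputable def lastZeroDensity (μ t a : ℝ) : ℝ :=
  Real.exp (-(μ ^ 2) * t / 2) / (π * Real.sqrt (a * (t - a))) +
    (μ ^ 2 / (2 * π)) * ∫ y in a..t, Real.exp (-(μ ^ 2) * y / 2) / Real.sqrt (a * (y - a))

/-! Since `√(a (y - a)) ≤ √(a (t - a))` for `y ∈ (a, t)`, the integral term of the density is at
least `(μ² / 2π) ∫ₐᵗ e^{-μ²y/2} dy / √(a (t - a)) = (e^{-μ²a/2} - e^{-μ²t/2}) / (π √(a (t - a)))`,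
and the remaining term is nonnegative. -/

open Set

theorem intervalIntegrable_div_sqrt_mul_sub {f : ℝ → ℝ} {a t : ℝ} (ha : 0 ≤ a) (hat : a ≤ t)
    (hf : ContinuousOn f (uIcc a t)) :
    IntervalIntegrable (fun y => f y / √(a * (y - a))) volume a t := by
  have hsing : IntervalIntegrable (fun y : ℝ => (y - a) ^ (-(1 / 2) : ℝ)) volume a t := by
    simpa using (intervalIntegral.intervalIntegrable_rpow' (r := -(1 / 2)) (by norm_num)
      (a := 0) (b := t - a)).comp_sub_right a
  refine ((hsing.const_mul (√a)⁻¹).continuousOn_mul hf).congr_uIoo fun y hy => ?_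
  rw [uIoo_of_le hat] at hy
  have hya : 0 ≤ y - a := by linarith [hy.1]
  simp only
  rw [sqrt_mul ha, rpow_neg hya, ← sqrt_eq_rpow, div_eq_mul_inv, mul_inv]

theorem integral_exp_neg_mul_div_two (k a t : ℝ) (hk : k ≠ 0) :
    ∫ y in a..t, exp (-k * y / 2) = 2 / k * (exp (-k * a / 2) - exp (-k * t / 2)) := by
  have hk' : -k / 2 ≠ 0 := by simpa using hk
  simp_rw [show ∀ y, -k * y / 2 = -k / 2 * y from fun y => by ring]
  rw [intervalIntegral.integral_comp_mul_left (fun x => exp x) hk', integral_exp, smul_eq_mul]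
  field_simp
  ring

theorem integral_div_le_integral_div_sqrt_mul_sub {f : ℝ → ℝ} {a t : ℝ} (ha : 0 < a)
    (hat : a ≤ t) (hf : ContinuousOn f (uIcc a t)) (hf0 : ∀ y ∈ Ioo a t, 0 ≤ f y) :
    (∫ y in a..t, f y) / √(a * (t - a)) ≤ ∫ y in a..t, f y / √(a * (y - a)) := by
  rw [← intervalIntegral.integral_div]
  refine intervalIntegral.integral_mono_on_of_le_Ioo hat (hf.intervalIntegrable.div_const _)
    (intervalIntegrable_div_sqrt_mul_sub ha.le hat hf) fun y hy => ?_
  have hpos : 0 < a * (y - a) := mul_pos ha (by linarith [hy.1])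
  exact div_le_div_of_nonneg_left (hf0 y hy) (sqrt_pos.2 hpos)
    (sqrt_le_sqrt (by nlinarith [hy.2]))

theorem stmt_7_general (μ t : ℝ) (hμ : μ ≠ 0) :
    ∀ a ∈ Set.Ioo 0 t,
      (Real.exp (-(μ ^ 2) * a / 2) - Real.exp (-(μ ^ 2) * t / 2)) /
          (π * Real.sqrt (a * (t - a)))
        ≤ lastZeroDensity μ t a := by
  rintro a ⟨ha, hat⟩
  have hμ2 : μ ^ 2 ≠ 0 := pow_ne_zero 2 hμ
  have hlow := integral_div_le_integral_div_sqrt_mul_sub (f := fun y => exp (-(μ ^ 2) * y / 2))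
    ha hat.le (by fun_prop) fun y _ => (exp_pos _).le
  rw [integral_exp_neg_mul_div_two _ _ _ hμ2] at hlow
  unfold lastZeroDensity
  calc (exp (-(μ ^ 2) * a / 2) - exp (-(μ ^ 2) * t / 2)) / (π * √(a * (t - a)))
      = μ ^ 2 / (2 * π) * (2 / μ ^ 2 * (exp (-(μ ^ 2) * a / 2) - exp (-(μ ^ 2) * t / 2)) /
          √(a * (t - a))) := by
        field_simp
    _ ≤ μ ^ 2 / (2 * π) * ∫ y in a..t, exp (-(μ ^ 2) * y / 2) / √(a * (y - a)) := by
        gcongr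
    _ ≤ _ := le_add_of_nonneg_left (by positivity)

theorem stmt_7 (μ t : ℝ) (hμ : μ ≠ 0) (ht : 0 < t) :
    ∀ a ∈ Set.Ioo 0 t,
      (Real.exp (-(μ ^ 2) * a / 2) - Real.exp (-(μ ^ 2) * t / 2)) /
          (π * Real.sqrt (a * (t - a)))
        ≤ lastZeroDensity μ t a :=
  stmt_7_general μ t hμ
end

section
/- Let μ ≠ 0, t > 0, and for b ∈ (0,t) and small ε > 0 let P_r = ∫_{b-ε}^{b+ε} f_{μ√r,t}(a) da where f is the density of the last zero crossing time. Then lim_{ε→0⁺} liminf_{r→∞} (1/r) log P_r ≥ -μ²b/2 and lim_{ε→0⁺} limsup_{r→∞} (1/r) log P_r ≤ -μ²b/2. -/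
open Real Filter MeasureTheory

/-!
For drift `ν` the substitution `y = a + x²` turns the singular inner integral of the density
into the Gaussian integral `(2 / √a) e^{-ν²a/2} ∫₀^{√(t-a)} e^{-ν²x²/2} dx`. Bounding it above
by `√t`, and below by its part over `[0, √w]` with `w = ε`, shows that for `ν² = μ²r` the density
lies between `K₁ r e^{-μ²(b+2ε)r/2}` and `K₂ r e^{-μ²(b-ε)r/2}` on `[b - ε, b + ε]`; the factor
`r` is invisible at exponential scale.
-/

open Topology

theorem integral_exp_div_sqrt_eq (c : ℝ) {a t : ℝ} (ha : 0 < a) (hat : a ≤ t) :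
    ∫ y in a..t, exp (-c * y / 2) / √(a * (y - a)) =
      2 * exp (-c * a / 2) / √a * ∫ x in 0..√(t - a), exp (-c * x ^ 2 / 2) := by
  have hsubst := intervalIntegral.integral_comp_mul_deriv_of_deriv_nonneg (a := 0) (b := √(t - a))
    (f := fun x => a + x ^ 2) (f' := fun x => 2 * x)
    (g := fun y => exp (-c * y / 2) / √(a * (y - a))) (by fun_prop)
    (fun x _ => by simpa using ((hasDerivAt_pow 2 x).const_add a))
    (fun x hx => by
      have : 0 ≤ x := by simpa [sqrt_nonneg] using hx.1.le
      positivity)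
  simp only [Function.comp_apply, sq_sqrt (sub_nonneg.2 hat), add_sub_cancel, zero_pow two_ne_zero,
    add_zero] at hsubst
  rw [← hsubst, ← intervalIntegral.integral_const_mul]
  refine intervalIntegral.integral_congr_ae (Eventually.of_forall fun x hx => ?_)
  have hx : 0 < x := by
    rw [Set.uIoc_of_le (sqrt_nonneg _)] at hx
    exact hx.1
  rw [add_sub_cancel_left, sqrt_mul ha.le, sqrt_sq hx.le]
  field_simp
  rw [← exp_add]
  ring_nf

theorem lastZeroDensity_eq (ν : ℝ) {t a : ℝ} (ha : 0 < a) (hat : a ≤ t) :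
    lastZeroDensity ν t a = exp (-(ν ^ 2) * t / 2) / (π * √(a * (t - a))) +
      ν ^ 2 / (π * √a) * exp (-(ν ^ 2) * a / 2) *
        ∫ x in 0..√(t - a), exp (-(ν ^ 2) * x ^ 2 / 2) := by
  rw [lastZeroDensity, integral_exp_div_sqrt_eq _ ha hat]
  field_simp

theorem continuousOn_lastZeroDensity (ν t : ℝ) :
    ContinuousOn (lastZeroDensity ν t) (Set.Ioo 0 t) := by
  have hprimitive : Continuous fun w => ∫ x in 0..w, exp (-(ν ^ 2) * x ^ 2 / 2) :=
    intervalIntegral.continuous_primitive (by fun_prop : Continuous _).intervalIntegrable 0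
  refine ContinuousOn.congr ?_ fun a ha => lastZeroDensity_eq ν ha.1 ha.2.le
  refine ContinuousOn.add ?_ ?_
  · refine continuousOn_const.div (by fun_prop) fun a ha => ?_
    have : 0 < a * (t - a) := mul_pos ha.1 (sub_pos.2 ha.2)
    positivity
  · refine ContinuousOn.mul (ContinuousOn.mul ?_ (by fun_prop))
      (hprimitive.comp (by fun_prop)).continuousOn
    refine continuousOn_const.div (by fun_prop) fun a ha => ?_
    have := ha.1
    positivity

theorem intervalIntegrable_lastZeroDensity (ν : ℝ) {t l u : ℝ} (hl : 0 < l) (hlu : l ≤ u)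
    (hut : u < t) : IntervalIntegrable (lastZeroDensity ν t) volume l u := by
  refine ((continuousOn_lastZeroDensity ν t).mono ?_).intervalIntegrable
  rw [Set.uIcc_of_le hlu]
  exact Set.Icc_subset_Ioo hl hut

theorem intervalIntegral_gaussian_le_self {c w : ℝ} (hc : 0 ≤ c) (hw : 0 ≤ w) :
    ∫ x in 0..w, exp (-c * x ^ 2 / 2) ≤ w := by
  calc ∫ x in 0..w, exp (-c * x ^ 2 / 2) ≤ ∫ _ in 0..w, (1 : ℝ) :=
        intervalIntegral.integral_mono_on hw ((by fun_prop : Continuous _).intervalIntegrable _ _)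
          intervalIntegrable_const fun x _ =>
          exp_le_one_iff.2 (by have := sq_nonneg x; nlinarith)
    _ = w := by simp

theorem self_mul_exp_le_intervalIntegral_gaussian {c w : ℝ} (hc : 0 ≤ c) (hw : 0 ≤ w) :
    w * exp (-c * w ^ 2 / 2) ≤ ∫ x in 0..w, exp (-c * x ^ 2 / 2) := by
  calc w * exp (-c * w ^ 2 / 2) = ∫ _ in 0..w, exp (-c * w ^ 2 / 2) := by simp
    _ ≤ ∫ x in 0..w, exp (-c * x ^ 2 / 2) :=
        intervalIntegral.integral_mono_on hw intervalIntegrable_const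
          ((by fun_prop : Continuous _).intervalIntegrable _ _) fun x hx => by
          have : x ^ 2 ≤ w ^ 2 := pow_le_pow_left₀ hx.1 hx.2 2
          exact exp_le_exp.2 (by nlinarith)

theorem le_lastZeroDensity (ν : ℝ) {t a w : ℝ} (ha : 0 < a) (hw : 0 ≤ w) (hwa : w ≤ t - a) :
    ν ^ 2 / (π * √a) * exp (-(ν ^ 2) * (a + w) / 2) * √w ≤ lastZeroDensity ν t a := by
  have hgauss : √w * exp (-(ν ^ 2) * w / 2) ≤ ∫ x in 0..√(t - a), exp (-(ν ^ 2) * x ^ 2 / 2) := by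
    calc √w * exp (-(ν ^ 2) * w / 2) ≤ ∫ x in 0..√w, exp (-(ν ^ 2) * x ^ 2 / 2) := by
          simpa [sq_sqrt hw] using
            self_mul_exp_le_intervalIntegral_gaussian (sq_nonneg ν) (sqrt_nonneg w)
      _ ≤ ∫ x in 0..√(t - a), exp (-(ν ^ 2) * x ^ 2 / 2) :=
          intervalIntegral.integral_mono_interval le_rfl (sqrt_nonneg w) (sqrt_le_sqrt hwa)
            (Eventually.of_forall fun _ => (exp_pos _).le)
            ((by fun_prop : Continuous _).intervalIntegrable _ _)
  rw [lastZeroDensity_eq ν ha (by linarith)]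
  calc ν ^ 2 / (π * √a) * exp (-(ν ^ 2) * (a + w) / 2) * √w
      = ν ^ 2 / (π * √a) * exp (-(ν ^ 2) * a / 2) * (√w * exp (-(ν ^ 2) * w / 2)) := by
        rw [mul_add, add_div, exp_add]; ring
    _ ≤ ν ^ 2 / (π * √a) * exp (-(ν ^ 2) * a / 2) *
          ∫ x in 0..√(t - a), exp (-(ν ^ 2) * x ^ 2 / 2) := by gcongr
    _ ≤ _ := le_add_of_nonneg_left (by positivity)

theorem lastZeroDensity_le (ν : ℝ) {t a : ℝ} (ha : 0 < a) (hat : a < t) :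
    lastZeroDensity ν t a ≤
      exp (-(ν ^ 2) * a / 2) * (1 / (π * √(a * (t - a))) + ν ^ 2 * √t / (π * √a)) := by
  have hexp : exp (-(ν ^ 2) * t / 2) ≤ exp (-(ν ^ 2) * a / 2) :=
    exp_le_exp.2 (by nlinarith [sq_nonneg ν])
  have hgauss : ∫ x in 0..√(t - a), exp (-(ν ^ 2) * x ^ 2 / 2) ≤ √t :=
    (intervalIntegral_gaussian_le_self (sq_nonneg ν) (sqrt_nonneg _)).trans
      (sqrt_le_sqrt (by linarith))
  have hat' : 0 < a * (t - a) := mul_pos ha (sub_pos.2 hat)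
  rw [lastZeroDensity_eq ν ha hat.le]
  calc _ ≤ exp (-(ν ^ 2) * a / 2) / (π * √(a * (t - a))) +
        ν ^ 2 / (π * √a) * exp (-(ν ^ 2) * a / 2) * √t := by gcongr
    _ = _ := by ring

theorem le_integral_lastZeroDensity (ν : ℝ) {t l u w : ℝ} (hl : 0 < l) (hlu : l ≤ u) (hw : 0 < w)
    (hwu : w ≤ t - u) :
    (u - l) * (ν ^ 2 / (π * √u) * exp (-(ν ^ 2) * (u + w) / 2) * √w) ≤
      ∫ a in l..u, lastZeroDensity ν t a := by
  have hpointwise : ∀ a ∈ Set.Icc l u,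
      ν ^ 2 / (π * √u) * exp (-(ν ^ 2) * (u + w) / 2) * √w ≤ lastZeroDensity ν t a := by
    intro a ⟨hla, hau⟩
    have ha : 0 < a := hl.trans_le hla
    refine le_trans ?_ (le_lastZeroDensity ν ha hw.le (by linarith))
    have hexp : exp (-(ν ^ 2) * (u + w) / 2) ≤ exp (-(ν ^ 2) * (a + w) / 2) :=
      exp_le_exp.2 (by nlinarith [sq_nonneg ν])
    gcongr
  have hmono := intervalIntegral.integral_mono_on hlu intervalIntegrable_const
    (intervalIntegrable_lastZeroDensity ν hl hlu (by linarith)) hpointwise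
  rwa [intervalIntegral.integral_const, smul_eq_mul] at hmono

theorem integral_lastZeroDensity_le (ν : ℝ) {t l u : ℝ} (hl : 0 < l) (hlu : l ≤ u) (hut : u < t) :
    ∫ a in l..u, lastZeroDensity ν t a ≤
      (u - l) * (exp (-(ν ^ 2) * l / 2) * (1 / (π * √(l * (t - u))) + ν ^ 2 * √t / (π * √l))) := by
  have hpointwise : ∀ a ∈ Set.Icc l u, lastZeroDensity ν t a ≤
      exp (-(ν ^ 2) * l / 2) * (1 / (π * √(l * (t - u))) + ν ^ 2 * √t / (π * √l)) := by
    intro a ⟨hla, hau⟩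
    refine (lastZeroDensity_le ν (hl.trans_le hla) (hau.trans_lt hut)).trans ?_
    have hexp : exp (-(ν ^ 2) * a / 2) ≤ exp (-(ν ^ 2) * l / 2) :=
      exp_le_exp.2 (by nlinarith [sq_nonneg ν])
    have hprod : l * (t - u) ≤ a * (t - a) :=
      mul_le_mul hla (by linarith) (by linarith) (by linarith)
    gcongr
  have hmono := intervalIntegral.integral_mono_on hlu
    (intervalIntegrable_lastZeroDensity ν hl hlu hut) intervalIntegrable_const hpointwise
  rwa [intervalIntegral.integral_const, smul_eq_mul] at hmono

theorem tendsto_inv_mul_log_mul_self_mul_exp {K : ℝ} (hK : 0 < K) (A : ℝ) :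
    Tendsto (fun r : ℝ => 1 / r * log (K * r * exp (-(A * r)))) atTop (𝓝 (-A)) := by
  have hlog : Tendsto (fun r : ℝ => log r / r) atTop (𝓝 0) := by
    simpa using tendsto_pow_log_div_mul_add_atTop 1 0 1 one_ne_zero
  have hsum := ((tendsto_inv_atTop_zero.const_mul (log K)).add hlog).sub_const A
  rw [mul_zero, zero_add, zero_sub] at hsum
  refine hsum.congr' ?_
  filter_upwards [eventually_gt_atTop 0] with r hr
  rw [log_mul (by positivity) (exp_pos _).ne', log_mul hK.ne' hr.ne', log_exp]
  field_simp
  ring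

theorem le_liminf_and_limsup_le_of_squeeze {ι : Type*} {l : Filter ι} [l.NeBot] {f g h : ι → ℝ}
    {x y : ℝ} (hg : Tendsto g l (𝓝 x)) (hh : Tendsto h l (𝓝 y)) (hgf : g ≤ᶠ[l] f)
    (hfh : f ≤ᶠ[l] h) : x ≤ liminf f l ∧ limsup f l ≤ y := by
  have hbddAbove : IsBoundedUnder (· ≤ ·) l f := hh.isBoundedUnder_le.mono_le hfh
  have hbddBelow : IsBoundedUnder (· ≥ ·) l f := hg.isBoundedUnder_ge.mono_ge hgf
  constructor
  · rw [← hg.liminf_eq]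
    exact liminf_le_liminf hgf hg.isBoundedUnder_ge hbddAbove.isCoboundedUnder_ge
  · rw [← hh.limsup_eq]
    exact limsup_le_limsup hfh hbddBelow.isCoboundedUnder_le hh.isBoundedUnder_le

theorem le_liminf_and_limsup_le_of_exp_bounds {P : ℝ → ℝ} {K₁ K₂ A B : ℝ} (hK₁ : 0 < K₁)
    (hK₂ : 0 < K₂)
    (hP : ∀ᶠ r in atTop, K₁ * r * exp (-(A * r)) ≤ P r ∧ P r ≤ K₂ * r * exp (-(B * r))) :
    -A ≤ liminf (fun r => 1 / r * log (P r)) atTop ∧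
      limsup (fun r => 1 / r * log (P r)) atTop ≤ -B := by
  refine le_liminf_and_limsup_le_of_squeeze (tendsto_inv_mul_log_mul_self_mul_exp hK₁ A)
    (tendsto_inv_mul_log_mul_self_mul_exp hK₂ B) ?_ ?_
  all_goals
    filter_upwards [hP, eventually_gt_atTop 0] with r ⟨hlow, hup⟩ hr
    have hlow_pos : 0 < K₁ * r * exp (-(A * r)) := by positivity
    gcongr
  exact hlow_pos.trans_le hlow

theorem integral_lastZeroDensity_mul_sqrt_bounds {μ : ℝ} (hμ : μ ≠ 0) {t b ε : ℝ} (hε : 0 < ε)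
    (hεb : ε < b) (hεt : 2 * ε < t - b) :
    ∃ K₁ > 0, ∃ K₂ > 0, ∀ r ≥ 1,
      K₁ * r * exp (-(μ ^ 2 * (b + 2 * ε) / 2 * r)) ≤
          ∫ a in (b - ε)..(b + ε), lastZeroDensity (μ * √r) t a ∧
        ∫ a in (b - ε)..(b + ε), lastZeroDensity (μ * √r) t a ≤
          K₂ * r * exp (-(μ ^ 2 * (b - ε) / 2 * r)) := by
  have hl : 0 < b - ε := by linarith
  have hlu : b - ε ≤ b + ε := by linarith
  have hu : 0 < b + ε := by linarith
  set C₁ := 1 / (π * √((b - ε) * (t - (b + ε))))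
  set C₂ := μ ^ 2 * √t / (π * √(b - ε)) with hC₂_def
  have hC₁ : 0 < C₁ := by
    have := sqrt_pos.2 (mul_pos hl (show 0 < t - (b + ε) by linarith))
    positivity
  have hC₂ : 0 < C₂ := by
    have := sqrt_pos.2 (show 0 < t by linarith)
    have := sqrt_pos.2 hl
    positivity
  refine ⟨2 * ε * (μ ^ 2 / (π * √(b + ε)) * √ε), by positivity, 2 * ε * (C₁ + C₂), by positivity,
    fun r hr => ?_⟩
  have hν : (μ * √r) ^ 2 = μ ^ 2 * r := by rw [mul_pow, sq_sqrt (by linarith)]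
  constructor
  · refine le_of_eq_of_le ?_ (le_integral_lastZeroDensity (μ * √r) hl hlu hε (by linarith))
    rw [hν]
    ring_nf
  · refine (integral_lastZeroDensity_le (μ * √r) hl hlu (by linarith)).trans ?_
    rw [hν]
    calc (b + ε - (b - ε)) *
          (exp (-(μ ^ 2 * r) * (b - ε) / 2) * (C₁ + μ ^ 2 * r * √t / (π * √(b - ε))))
        = 2 * ε * exp (-(μ ^ 2 * (b - ε) / 2 * r)) * (C₁ + C₂ * r) := by
          rw [hC₂_def]; ring_nf
      _ ≤ 2 * ε * exp (-(μ ^ 2 * (b - ε) / 2 * r)) * (C₁ * r + C₂ * r) := by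
        gcongr
        exact le_mul_of_one_le_right hC₁.le hr
      _ = 2 * ε * (C₁ + C₂) * r * exp (-(μ ^ 2 * (b - ε) / 2 * r)) := by ring

theorem stmt_9_general (μ t b : ℝ) (hμ : μ ≠ 0) (hb : b ∈ Set.Ioo 0 t) :
    ∀ δ > 0, ∃ ε₀ > 0, ∀ ε, 0 < ε → ε < ε₀ →
      -(μ ^ 2 * b / 2) - δ ≤
          liminf (fun r : ℝ =>
            (1 / r) * Real.log (∫ a in (b - ε)..(b + ε),
              lastZeroDensity (μ * Real.sqrt r) t a)) atTop ∧
      limsup (fun r : ℝ =>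
          (1 / r) * Real.log (∫ a in (b - ε)..(b + ε),
            lastZeroDensity (μ * Real.sqrt r) t a)) atTop ≤
        -(μ ^ 2 * b / 2) + δ := by
  intro δ hδ
  have hμ2 : 0 < μ ^ 2 := sq_pos_of_ne_zero hμ
  refine ⟨min b (min ((t - b) / 2) (δ / μ ^ 2)), lt_min hb.1 (lt_min (by linarith [hb.2])
    (div_pos hδ hμ2)), fun ε hε hεε₀ => ?_⟩
  simp only [lt_min_iff, lt_div_iff₀ hμ2] at hεε₀
  obtain ⟨hεb, hεt, hεδ⟩ := hεε₀
  obtain ⟨K₁, hK₁, K₂, hK₂, hbounds⟩ :=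
    integral_lastZeroDensity_mul_sqrt_bounds (t := t) hμ hε hεb (by linarith)
  obtain ⟨hliminf, hlimsup⟩ := le_liminf_and_limsup_le_of_exp_bounds hK₁ hK₂
    ((eventually_ge_atTop 1).mono hbounds)
  constructor <;> linarith

theorem stmt_9 (μ t b : ℝ) (hμ : μ ≠ 0) (ht : 0 < t) (hb : b ∈ Set.Ioo 0 t) :
    ∀ δ > 0, ∃ ε₀ > 0, ∀ ε, 0 < ε → ε < ε₀ →
      -(μ ^ 2 * b / 2) - δ ≤
          liminf (fun r : ℝ =>
            (1 / r) * Real.log (∫ a in (b - ε)..(b + ε),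
              lastZeroDensity (μ * Real.sqrt r) t a)) atTop ∧
      limsup (fun r : ℝ =>
          (1 / r) * Real.log (∫ a in (b - ε)..(b + ε),
            lastZeroDensity (μ * Real.sqrt r) t a)) atTop ≤
        -(μ ^ 2 * b / 2) + δ :=
  stmt_9_general μ t b hμ hb
end

section
/- For μ ≠ 0 and t > 0, with E[T_{μ,t}²] = (3/4)∫₀^t a·e^{-μ²a/2} da and E[T_{μ,t}] = (1-e^{-μ²t/2})/μ², the variance of T_{μ√r,t} equals -(3t/(2μ²r))e^{-μ²rt/2} + (3/(μ⁴r²))(1-e^{-μ²rt/2}) - (1-e^{-μ²rt/2})²/(μ⁴r²), and lim_{r→∞} r² · Var[T_{μ√r,t}] = 2/μ⁴. -/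
open Real Filter MeasureTheory Topology

/-!
The second moment is an elementary integral: `a ↦ -(a / c + 1 / c ^ 2) e^{-c a}` is a primitive of
`a e^{-c a}`. With `c = μ² r / 2` the variance is then an explicit combination of `1/r`, `1/r²` and
`e^{-μ² r t / 2}`; after multiplying by `r²`, the exponential terms (also `r e^{-μ² r t / 2}`) vanish
as `r → ∞`, leaving `3/μ⁴ - 1/μ⁴`.
-/

theorem integral_mul_exp_neg_mul {c : ℝ} (hc : c ≠ 0) (t : ℝ) :
    ∫ a in (0:ℝ)..t, a * exp (-c * a) = (1 - (1 + c * t) * exp (-c * t)) / c ^ 2 := by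
  have hderiv : ∀ x : ℝ, HasDerivAt (fun a => -(a / c + 1 / c ^ 2) * exp (-c * a))
      (x * exp (-c * x)) x := fun x => by
    have hexp : HasDerivAt (fun a => exp (-c * a)) (exp (-c * x) * (-c * 1)) x :=
      ((hasDerivAt_id x).const_mul (-c)).exp
    have hlin : HasDerivAt (fun a : ℝ => -(a / c + 1 / c ^ 2)) (-(1 / c)) x :=
      (((hasDerivAt_id x).div_const c).add_const (1 / c ^ 2)).neg
    exact (hlin.mul hexp).congr_deriv (by field_simp; ring)
  have hint : IntervalIntegrable (fun a => a * exp (-c * a)) volume 0 t :=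
    (by fun_prop : Continuous fun a => a * exp (-c * a)).intervalIntegrable 0 t
  rw [intervalIntegral.integral_eq_sub_of_hasDerivAt (fun x _ => hderiv x) hint, mul_zero,
    exp_zero]
  field_simp
  ring

theorem tendsto_exp_neg_mul_atTop {b : ℝ} (hb : 0 < b) :
    Tendsto (fun r : ℝ => exp (-b * r)) atTop (𝓝 0) :=
  tendsto_exp_atBot.comp <| tendsto_id.const_mul_atTop_of_neg (by linarith)

theorem tendsto_mul_exp_neg_mul_atTop {b : ℝ} (hb : 0 < b) :
    Tendsto (fun r : ℝ => r * exp (-b * r)) atTop (𝓝 0) := by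
  simpa using tendsto_rpow_mul_exp_neg_mul_atTop_nhds_zero 1 b hb

theorem second_moment_sub_sq_mean {μ r : ℝ} (hμ : μ ≠ 0) (hr : r ≠ 0) (t : ℝ) :
    (3 / 4) * (∫ a in (0:ℝ)..t, a * exp (-(μ ^ 2) * r * a / 2)) -
        ((1 - exp (-(μ ^ 2) * r * t / 2)) / (μ ^ 2 * r)) ^ 2 =
      -(3 * t / (2 * μ ^ 2 * r)) * exp (-(μ ^ 2) * r * t / 2) +
        (3 / (μ ^ 4 * r ^ 2)) * (1 - exp (-(μ ^ 2) * r * t / 2)) -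
        (1 - exp (-(μ ^ 2) * r * t / 2)) ^ 2 / (μ ^ 4 * r ^ 2) := by
  have hc : μ ^ 2 * r / 2 ≠ 0 := by positivity
  have hexp (a : ℝ) : exp (-(μ ^ 2) * r * a / 2) = exp (-(μ ^ 2 * r / 2) * a) := by ring_nf
  simp_rw [hexp, integral_mul_exp_neg_mul hc]
  field_simp
  ring

theorem tendsto_sq_mul_variance {μ t : ℝ} (hμ : μ ≠ 0) (ht : 0 < t) :
    Tendsto (fun r => r ^ 2 *
      (-(3 * t / (2 * μ ^ 2 * r)) * exp (-(μ ^ 2) * r * t / 2) +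
        (3 / (μ ^ 4 * r ^ 2)) * (1 - exp (-(μ ^ 2) * r * t / 2)) -
        (1 - exp (-(μ ^ 2) * r * t / 2)) ^ 2 / (μ ^ 4 * r ^ 2))) atTop (𝓝 (2 / μ ^ 4)) := by
  have hb : 0 < μ ^ 2 * t / 2 := by positivity
  have hexp (r : ℝ) : exp (-(μ ^ 2) * r * t / 2) = exp (-(μ ^ 2 * t / 2) * r) := by ring_nf
  simp_rw [hexp]
  have hE := (tendsto_const_nhds (x := (1 : ℝ))).sub (tendsto_exp_neg_mul_atTop hb)
  have hlim := ((tendsto_mul_exp_neg_mul_atTop hb).const_mul (-(3 * t / (2 * μ ^ 2)))).add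
    (hE.const_mul (3 / μ ^ 4)) |>.sub ((hE.pow 2).div_const (μ ^ 4))
  refine (hlim.congr' ?_).trans (le_of_eq (by ring_nf))
  filter_upwards [eventually_ne_atTop 0] with r hr
  field_simp

theorem stmt_15 (μ t : ℝ) (hμ : μ ≠ 0) (ht : 0 < t)
    (m1 m2 : ℝ → ℝ)
    (hm1 : ∀ r > 0, m1 r = (1 - Real.exp (-(μ ^ 2) * r * t / 2)) / (μ ^ 2 * r))
    (hm2 : ∀ r > 0, m2 r = (3 / 4) * ∫ a in (0:ℝ)..t, a * Real.exp (-(μ ^ 2) * r * a / 2)) :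
    (∀ r > 0,
      m2 r - (m1 r) ^ 2 =
        -(3 * t / (2 * μ ^ 2 * r)) * Real.exp (-(μ ^ 2) * r * t / 2) +
          (3 / (μ ^ 4 * r ^ 2)) * (1 - Real.exp (-(μ ^ 2) * r * t / 2)) -
          (1 - Real.exp (-(μ ^ 2) * r * t / 2)) ^ 2 / (μ ^ 4 * r ^ 2)) ∧
    Tendsto (fun r => r ^ 2 * (m2 r - (m1 r) ^ 2)) atTop (nhds (2 / μ ^ 4)) := by
  have hvar (r : ℝ) (hr : 0 < r) :=
    (hm1 r hr).symm ▸ (hm2 r hr).symm ▸ second_moment_sub_sq_mean hμ hr.ne' t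
  refine ⟨hvar, (tendsto_sq_mul_variance hμ ht).congr' ?_⟩
  filter_upwards [eventually_gt_atTop 0] with r hr
  rw [hvar r hr]
end
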